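/- arXiv:1908.04652 — 4 statements merged into one kernel-verified Lean document; each statement's English description precedes it below -/
import Mathlib

section
/- Let H be a real Hilbert space, S : H → H a bounded linear operator with Hilbert-space adjoint S*, K ⊆ H a nonempty closed convex set, α > 0, σ > 0, and g ∈ H. Suppose u⁺, z⁺, z⁰, λ⁰, δ, u*, z*, λ* ∈ H satisfy: (i) S*(S u⁺ − g) + α u⁺ + λ⁰ + σ(u⁺ − z⁰) = δ; (ii) z⁺ ∈ K and ⟨λ⁰ + σ(u⁺ − z⁺), w − z⁺⟩ ≤ 0 for all w ∈ K; (iii) S*(S u* − g) + α u* + λ* = 0, u* = z* ∈ K, and ⟨λ*, w − z*⟩ ≤ 0 for all w ∈ K. Then, with r := u⁺ − z⁺, one has ⟨δ, u⁺ − u*⟩ − ⟨λ⁰ + σ r − λ*, r⟩ − σ⟨z⁺ − z⁰, u⁺ − u*⟩ ≥ α‖u⁺ − u*‖². -/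
/-! Subtracting the KKT equation from the optimality equation of the step shows that
`δ = (S*S + α) (u⁺ − u*) + (v − λ*) + σ (z⁺ − z⁰)` with `v = λ⁰ + σ r`. Pairing with
`u⁺ − u*` and using `u⁺ − u* − r = z⁺ − z*`, the claimed right-hand side becomes
`⟨(S*S + α)(u⁺ − u*), u⁺ − u*⟩ + ⟨v − λ*, z⁺ − z*⟩`. The first term is at least
`α‖u⁺ − u*‖²`, and the second is nonnegative by monotonicity of the normal cone of `K`. -/

open scoped InnerProductSpace

section NormalCone

variable {H : Type*} [NormedAddCommGroup H] [InnerProductSpace ℝ H]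

/-- The normal cone of `K` at `z`; it equals `∂δ_K(z)` only for `z ∈ K`
(otherwise `∂δ_K(z) = ∅`). -/
def normalCone (K : Set H) (z : H) : Set H :=
  {v | ∀ w ∈ K, ⟪v, w - z⟫_ℝ ≤ 0}

theorem inner_sub_sub_nonneg_of_mem_normalCone {K : Set H} {z z' v v' : H}
    (hz : z ∈ K) (hz' : z' ∈ K) (hv : v ∈ normalCone K z) (hv' : v' ∈ normalCone K z') :
    0 ≤ ⟪v - v', z - z'⟫_ℝ := by
  have h : ⟪v, z' - z⟫_ℝ ≤ 0 := hv z' hz'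
  have h' : ⟪v', z - z'⟫_ℝ ≤ 0 := hv' z hz
  rw [← neg_sub z z', inner_neg_right] at h
  rw [inner_sub_left]
  linarith

end NormalCone

theorem mul_norm_sq_le_inner_adjoint_apply_add_smul {E F : Type*}
    [NormedAddCommGroup E] [InnerProductSpace ℝ E] [CompleteSpace E]
    [NormedAddCommGroup F] [InnerProductSpace ℝ F] [CompleteSpace F]
    (S : E →L[ℝ] F) (α : ℝ) (x : E) :
    α * ‖x‖ ^ 2 ≤ ⟪(ContinuousLinearMap.adjoint S) (S x) + α • x, x⟫_ℝ := by
  rw [inner_add_left, ContinuousLinearMap.adjoint_inner_left, real_inner_smul_left,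
    real_inner_self_eq_norm_sq, real_inner_self_eq_norm_sq]
  linarith [sq_nonneg ‖S x‖]

theorem stmt_9_general {H : Type*} [NormedAddCommGroup H] [InnerProductSpace ℝ H] [CompleteSpace H]
    (S : H →L[ℝ] H)
    (K : Set H)
    (α σ : ℝ) (g : H)
    (up zp z0 lam0 δ ustar zstar lamstar : H)
    (h1 : (ContinuousLinearMap.adjoint S) (S up - g) + α • up + lam0 + σ • (up - z0) = δ)
    (h2 : zp ∈ K)
    (h2' : ∀ w ∈ K, (inner ℝ (lam0 + σ • (up - zp)) (w - zp) : ℝ) ≤ 0)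
    (h3 : (ContinuousLinearMap.adjoint S) (S ustar - g) + α • ustar + lamstar = 0)
    (h4 : ustar = zstar) (h5 : zstar ∈ K)
    (h6 : ∀ w ∈ K, (inner ℝ lamstar (w - zstar) : ℝ) ≤ 0)
    (r : H) (hr : r = up - zp) :
    α * ‖up - ustar‖ ^ 2 ≤
      (inner ℝ δ (up - ustar) : ℝ) - (inner ℝ (lam0 + σ • r - lamstar) r : ℝ)
        - σ * (inner ℝ (zp - z0) (up - ustar) : ℝ) := by
  subst hr h4
  set v := lam0 + σ • (up - zp)
  set T := ContinuousLinearMap.adjoint S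
  have hδ : δ = (T (S (up - ustar)) + α • (up - ustar)) + (v - lamstar) + σ • (zp - z0) := by
    rw [← h1, ← sub_zero (T (S up - g) + α • up + lam0 + σ • (up - z0)), ← h3]
    simp only [v, map_sub]
    module
  have hsplit : ⟪v - lamstar, up - ustar⟫_ℝ - ⟪v - lamstar, up - zp⟫_ℝ
      = ⟪v - lamstar, zp - ustar⟫_ℝ := by
    rw [← inner_sub_right, sub_sub_sub_cancel_left]
  have hmono : 0 ≤ ⟪v - lamstar, zp - ustar⟫_ℝ :=
    inner_sub_sub_nonneg_of_mem_normalCone h2 h5 h2' h6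
  calc α * ‖up - ustar‖ ^ 2
      ≤ ⟪T (S (up - ustar)) + α • (up - ustar), up - ustar⟫_ℝ + ⟪v - lamstar, zp - ustar⟫_ℝ := by
        linarith [mul_norm_sq_le_inner_adjoint_apply_add_smul S α (up - ustar)]
    _ = _ := by
        rw [hδ, inner_add_left _ (σ • _), inner_add_left _ (v - lamstar), real_inner_smul_left]
        linarith

/-- The central inequality (3.26): from the optimality conditions of one inexact ADMM
step with residual `δ` and the KKT system of the reduced problem, with `r = u⁺ − z⁺`,
`⟨δ, u⁺ − u*⟩ − ⟨λ⁰ + σr − λ*, r⟩ − σ⟨z⁺ − z⁰, u⁺ − u*⟩ ≥ α‖u⁺ − u*‖²`. -/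
theorem stmt_9 {H : Type*} [NormedAddCommGroup H] [InnerProductSpace ℝ H] [CompleteSpace H]
    (S : H →L[ℝ] H)
    (K : Set H) (hKne : K.Nonempty) (hKcl : IsClosed K) (hKconv : Convex ℝ K)
    (α σ : ℝ) (hα : 0 < α) (hσ : 0 < σ) (g : H)
    (up zp z0 lam0 δ ustar zstar lamstar : H)
    (h1 : (ContinuousLinearMap.adjoint S) (S up - g) + α • up + lam0 + σ • (up - z0) = δ)
    (h2 : zp ∈ K)
    (h2' : ∀ w ∈ K, (inner ℝ (lam0 + σ • (up - zp)) (w - zp) : ℝ) ≤ 0)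
    (h3 : (ContinuousLinearMap.adjoint S) (S ustar - g) + α • ustar + lamstar = 0)
    (h4 : ustar = zstar) (h5 : zstar ∈ K)
    (h6 : ∀ w ∈ K, (inner ℝ lamstar (w - zstar) : ℝ) ≤ 0)
    (r : H) (hr : r = up - zp) :
    α * ‖up - ustar‖ ^ 2 ≤
      (inner ℝ δ (up - ustar) : ℝ) - (inner ℝ (lam0 + σ • r - lamstar) r : ℝ)
        - σ * (inner ℝ (zp - z0) (up - ustar) : ℝ) :=
  stmt_9_general S K α σ g up zp z0 lam0 δ ustar zstar lamstar h1 h2 h2' h3 h4 h5 h6 r hr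
end

section
/- Let H be a real Hilbert space, S : H → H a bounded linear operator with Hilbert-space adjoint S*, K ⊆ H a nonempty closed convex set, α > 0, σ > 0, τ > 0, and g ∈ H. Suppose u⁺, z⁺, z⁰, λ⁰, δ, u*, z*, λ* ∈ H satisfy: (i) S*(S u⁺ − g) + α u⁺ + λ⁰ + σ(u⁺ − z⁰) = δ; (ii) z⁺ ∈ K and ⟨λ⁰ + σ(u⁺ − z⁺), w − z⁺⟩ ≤ 0 for all w ∈ K; (iii) S*(S u* − g) + α u* + λ* = 0, u* = z* ∈ K, and ⟨λ*, w − z*⟩ ≤ 0 for all w ∈ K. Define λ⁺ := λ⁰ + τσ(u⁺ − z⁺). Then ⟨δ, u⁺ − u*⟩ + (1/(2τσ))‖λ* − λ⁰‖² + (σ/2)‖z* − z⁰‖² − (1/(2τσ))‖λ* − λ⁺‖² − (σ/2)‖z* − z⁺‖² ≥ α‖u⁺ − u*‖² + ((1 − τ)σ/2)‖u⁺ − z⁺‖² + (σ/2)‖u⁺ − z⁰‖². -/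
/-!
Subtracting the KKT system from the optimality condition of the `u`-step and testing with
`u⁺ - u*`, strong monotonicity of `u ↦ S*(S u - g) + α u` gives
`α ‖u⁺ - u*‖² ≤ ⟪δ - σ (u⁺ - z⁰) + (λ* - λ⁰), u⁺ - u*⟫`; monotonicity of the normal cone of `K`
at `z⁺` and `z*` gives `0 ≤ ⟪σ (u⁺ - z⁺) - (λ* - λ⁰), z⁺ - u*⟫`. Adding the two and expanding
the squares, with `λ⁺ - λ⁰ = τσ (u⁺ - z⁺)`, yields the estimate.
-/

open scoped RealInnerProductSpace

section

variable {F : Type*} [NormedAddCommGroup F] [InnerProductSpace ℝ F]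

theorem inner_sub_sub_nonneg_of_forall_inner_sub_nonpos {K : Set F} {x y a b : F}
    (hx : x ∈ K) (hy : y ∈ K) (ha : ∀ w ∈ K, ⟪a, w - x⟫ ≤ 0) (hb : ∀ w ∈ K, ⟪b, w - y⟫ ≤ 0) :
    0 ≤ ⟪a - b, x - y⟫ := by
  have hay := ha y hy
  have hbx := hb x hx
  rw [← neg_sub x y, inner_neg_right] at hay
  rw [inner_sub_left]
  linarith

theorem inner_quadratic_gradient_sub_sub [CompleteSpace F] (S : F →L[ℝ] F) (g u v : F) (α : ℝ) :
    ⟪(S.adjoint (S u - g) + α • u) - (S.adjoint (S v - g) + α • v), u - v⟫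
      = ‖S (u - v)‖ ^ 2 + α * ‖u - v‖ ^ 2 := by
  have hlin : (S.adjoint (S u - g) + α • u) - (S.adjoint (S v - g) + α • v)
      = S.adjoint (S (u - v)) + α • (u - v) := by
    simp only [map_sub, smul_sub]
    abel
  rw [hlin, inner_add_left, ContinuousLinearMap.adjoint_inner_left, real_inner_smul_left,
    real_inner_self_eq_norm_sq, real_inner_self_eq_norm_sq]

theorem admm_step_energy_le (δ e r m a : F) {α σ τ : ℝ} (hσ : σ ≠ 0) (hτ : τ ≠ 0)
    (hgrad : α * ‖e‖ ^ 2 ≤ ⟪δ - σ • m + a, e⟫) (hnormal : 0 ≤ ⟪σ • r - a, e - r⟫) :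
    α * ‖e‖ ^ 2 + (1 - τ) * σ / 2 * ‖r‖ ^ 2 + σ / 2 * ‖m‖ ^ 2 ≤
      ⟪δ, e⟫ + 1 / (2 * τ * σ) * ‖a‖ ^ 2 + σ / 2 * ‖m - e‖ ^ 2
        - 1 / (2 * τ * σ) * ‖a - (τ * σ) • r‖ ^ 2 - σ / 2 * ‖r - e‖ ^ 2 := by
  have hdual : 1 / (2 * τ * σ) * ‖a‖ ^ 2 - 1 / (2 * τ * σ) * ‖a - (τ * σ) • r‖ ^ 2
      = ⟪a, r⟫ - τ * σ / 2 * ‖r‖ ^ 2 := by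
    rw [norm_sub_sq_real, real_inner_smul_right, norm_smul, Real.norm_eq_abs, mul_pow, sq_abs]
    field_simp
    ring
  rw [norm_sub_sq_real m e, norm_sub_sq_real r e]
  simp only [inner_sub_left, inner_sub_right, inner_add_left, real_inner_smul_left,
    real_inner_self_eq_norm_sq] at hgrad hnormal
  linarith

end

theorem stmt_10_general {H : Type*} [NormedAddCommGroup H] [InnerProductSpace ℝ H] [CompleteSpace H]
    (S : H →L[ℝ] H)
    (K : Set H)
    (α σ τ : ℝ) (hσ : 0 < σ) (hτ : 0 < τ) (g : H)
    (up zp z0 lam0 δ ustar zstar lamstar : H)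
    (h1 : (ContinuousLinearMap.adjoint S) (S up - g) + α • up + lam0 + σ • (up - z0) = δ)
    (h2 : zp ∈ K)
    (h2' : ∀ w ∈ K, (inner ℝ (lam0 + σ • (up - zp)) (w - zp) : ℝ) ≤ 0)
    (h3 : (ContinuousLinearMap.adjoint S) (S ustar - g) + α • ustar + lamstar = 0)
    (h4 : ustar = zstar) (h5 : zstar ∈ K)
    (h6 : ∀ w ∈ K, (inner ℝ lamstar (w - zstar) : ℝ) ≤ 0)
    (lamp : H) (hlamp : lamp = lam0 + (τ * σ) • (up - zp)) :
    α * ‖up - ustar‖ ^ 2 + (1 - τ) * σ / 2 * ‖up - zp‖ ^ 2 + σ / 2 * ‖up - z0‖ ^ 2 ≤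
      (inner ℝ δ (up - ustar) : ℝ)
        + 1 / (2 * τ * σ) * ‖lamstar - lam0‖ ^ 2 + σ / 2 * ‖zstar - z0‖ ^ 2
        - 1 / (2 * τ * σ) * ‖lamstar - lamp‖ ^ 2 - σ / 2 * ‖zstar - zp‖ ^ 2 := by
  subst h4 hlamp
  have hgrad : α * ‖up - ustar‖ ^ 2 ≤ ⟪δ - σ • (up - z0) + (lamstar - lam0), up - ustar⟫ := by
    have hdiff : δ - σ • (up - z0) + (lamstar - lam0)
        = (S.adjoint (S up - g) + α • up) - (S.adjoint (S ustar - g) + α • ustar) := by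
      linear_combination (norm := module) h3 - h1
    rw [hdiff, inner_quadratic_gradient_sub_sub]
    exact le_add_of_nonneg_left (sq_nonneg _)
  have hnormal : 0 ≤ ⟪σ • (up - zp) - (lamstar - lam0), (up - ustar) - (up - zp)⟫ := by
    convert inner_sub_sub_nonneg_of_forall_inner_sub_nonpos h2 h5 h2' h6 using 2 <;> abel
  have key := admm_step_energy_le δ _ _ _ _ hσ.ne' hτ.ne' hgrad hnormal
  rwa [sub_sub_sub_cancel_left, sub_sub_sub_cancel_left, sub_sub lamstar] at key

/-- Proposition 3.5 (one abstract step of the inexact ADMM measured against a KKT point),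
with the corrected coefficient `(1 − τ)`:
`⟨δ, u⁺ − u*⟩ + (1/(2τσ))‖λ* − λ⁰‖² + (σ/2)‖z* − z⁰‖² − (1/(2τσ))‖λ* − λ⁺‖²
  − (σ/2)‖z* − z⁺‖² ≥ α‖u⁺ − u*‖² + ((1−τ)σ/2)‖u⁺ − z⁺‖² + (σ/2)‖u⁺ − z⁰‖²`. -/
theorem stmt_10 {H : Type*} [NormedAddCommGroup H] [InnerProductSpace ℝ H] [CompleteSpace H]
    (S : H →L[ℝ] H)
    (K : Set H) (hKne : K.Nonempty) (hKcl : IsClosed K) (hKconv : Convex ℝ K)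
    (α σ τ : ℝ) (hα : 0 < α) (hσ : 0 < σ) (hτ : 0 < τ) (g : H)
    (up zp z0 lam0 δ ustar zstar lamstar : H)
    (h1 : (ContinuousLinearMap.adjoint S) (S up - g) + α • up + lam0 + σ • (up - z0) = δ)
    (h2 : zp ∈ K)
    (h2' : ∀ w ∈ K, (inner ℝ (lam0 + σ • (up - zp)) (w - zp) : ℝ) ≤ 0)
    (h3 : (ContinuousLinearMap.adjoint S) (S ustar - g) + α • ustar + lamstar = 0)
    (h4 : ustar = zstar) (h5 : zstar ∈ K)
    (h6 : ∀ w ∈ K, (inner ℝ lamstar (w - zstar) : ℝ) ≤ 0)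
    (lamp : H) (hlamp : lamp = lam0 + (τ * σ) • (up - zp)) :
    α * ‖up - ustar‖ ^ 2 + (1 - τ) * σ / 2 * ‖up - zp‖ ^ 2 + σ / 2 * ‖up - z0‖ ^ 2 ≤
      (inner ℝ δ (up - ustar) : ℝ)
        + 1 / (2 * τ * σ) * ‖lamstar - lam0‖ ^ 2 + σ / 2 * ‖zstar - z0‖ ^ 2
        - 1 / (2 * τ * σ) * ‖lamstar - lamp‖ ^ 2 - σ / 2 * ‖zstar - zp‖ ^ 2 :=
  stmt_10_general S K α σ τ hσ hτ g up zp z0 lam0 δ ustar zstar lamstar h1 h2 h2' h3 h4 h5 h6 lamp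
    hlamp
end

section
/- Let H be a real Hilbert space, S : H → H a bounded linear operator with Hilbert-space adjoint S*, K ⊆ H a nonempty closed convex set, α > 0, σ > 0, τ > 0, and g ∈ H. Suppose ũ, z̃, z⁰, λ⁰, u*, z*, λ* ∈ H satisfy: (i) S*(S ũ − g) + α ũ + λ⁰ + σ(ũ − z⁰) = 0; (ii) z̃ ∈ K and ⟨λ⁰ + σ(ũ − z̃), w − z̃⟩ ≤ 0 for all w ∈ K; (iii) S*(S u* − g) + α u* + λ* = 0, u* = z* ∈ K, and ⟨λ*, w − z*⟩ ≤ 0 for all w ∈ K. Define λ̃ := λ⁰ + τσ(ũ − z̃). Then (1/(2τσ))‖λ* − λ⁰‖² + (σ/2)‖z* − z⁰‖² − (1/(2τσ))‖λ* − λ̃‖² − (σ/2)‖z* − z̃‖² ≥ α‖ũ − u*‖² + ((1 − τ)σ/2)‖ũ − z̃‖² + (σ/2)‖ũ − z⁰‖². -/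
/-!
Testing the difference of the two stationarity equations with `ũ - u*` uses the strong
monotonicity of the gradient `u ↦ S*(Su - g) + αu`; the two variational inequalities for `z̃` and
`z*` give monotonicity of the normal cone of `K`. Adding both estimates, the multiplier terms telescope
into `⟪λ* - λ⁰, ũ - z̃⟫`, which is the cross term of `‖λ* - λ̃‖²`, and the remaining `σ`-terms are
rearranged by a four-point identity for the inner product.
-/

open ContinuousLinearMap

noncomputable section

/-- The gradient of `u ↦ ½‖S u - g‖² + (α/2)‖u‖²`. -/
def tikhonovGrad {E F : Type*} [NormedAddCommGroup E] [InnerProductSpace ℝ E] [CompleteSpace E]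
    [NormedAddCommGroup F] [InnerProductSpace ℝ F] [CompleteSpace F]
    (S : E →L[ℝ] F) (g : F) (α : ℝ) (u : E) : E :=
  adjoint S (S u - g) + α • u

end

section InnerProductSpace

variable {E : Type*} [NormedAddCommGroup E] [InnerProductSpace ℝ E]

theorem tikhonovGrad_strongMonotone [CompleteSpace E] {F : Type*} [NormedAddCommGroup F]
    [InnerProductSpace ℝ F] [CompleteSpace F] (S : E →L[ℝ] F) (g : F) (α : ℝ) (u v : E) :
    α * ‖u - v‖ ^ 2 ≤ inner ℝ (tikhonovGrad S g α u - tikhonovGrad S g α v) (u - v) := by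
  have hdiff :
      tikhonovGrad S g α u - tikhonovGrad S g α v = adjoint S (S (u - v)) + α • (u - v) := by
    simp only [tikhonovGrad, map_sub, smul_sub]
    abel
  rw [hdiff, inner_add_left, adjoint_inner_left, real_inner_self_eq_norm_sq, real_inner_smul_left,
    real_inner_self_eq_norm_sq]
  nlinarith [sq_nonneg ‖S (u - v)‖]

theorem real_inner_sub_sub_nonpos_of_forall_inner_nonpos {K : Set E} {x y a b : E}
    (hx : x ∈ K) (hy : y ∈ K) (ha : ∀ w ∈ K, inner ℝ a (w - x) ≤ 0)
    (hb : ∀ w ∈ K, inner ℝ b (w - y) ≤ 0) :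
    inner ℝ (a - b) (y - x) ≤ 0 := by
  have hba := hb x hx
  rw [← neg_sub, inner_neg_right] at hba
  rw [inner_sub_left]
  linarith [ha y hy]

theorem two_mul_inner_add_two_mul_inner_eq (x y p q : E) :
    2 * inner ℝ (x - p) (x - y) + 2 * inner ℝ (x - q) (y - q) =
      ‖x - p‖ ^ 2 + ‖x - q‖ ^ 2 + ‖y - q‖ ^ 2 - ‖y - p‖ ^ 2 := by
  have hyp : ‖y - p‖ ^ 2 = ‖x - p‖ ^ 2 - 2 * inner ℝ (x - p) (x - y) + ‖x - y‖ ^ 2 := by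
    rw [← norm_sub_sq_real, sub_sub_sub_cancel_left]
  have hxq : ‖x - q‖ ^ 2 = ‖x - y‖ ^ 2 + 2 * inner ℝ (x - y) (y - q) + ‖y - q‖ ^ 2 := by
    rw [← norm_add_sq_real, sub_add_sub_cancel]
  have hxqy : inner ℝ (x - q) (y - q) = inner ℝ (x - y) (y - q) + ‖y - q‖ ^ 2 := by
    rw [← real_inner_self_eq_norm_sq, ← inner_add_left, sub_add_sub_cancel]
  linarith

theorem one_div_two_mul_norm_sq_sub_norm_sub_smul_sq {c : ℝ} (hc : c ≠ 0) (a d : E) :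
    1 / (2 * c) * ‖a‖ ^ 2 - 1 / (2 * c) * ‖a - c • d‖ ^ 2 = inner ℝ a d - c / 2 * ‖d‖ ^ 2 := by
  rw [norm_sub_sq_real, norm_smul, real_inner_smul_right, Real.norm_eq_abs, mul_pow, sq_abs]
  field_simp
  ring

end InnerProductSpace

theorem stmt_11_general {H : Type*} [NormedAddCommGroup H] [InnerProductSpace ℝ H] [CompleteSpace H]
    (S : H →L[ℝ] H)
    (K : Set H)
    (α σ τ : ℝ) (hσ : 0 < σ) (hτ : 0 < τ) (g : H)
    (ut zt z0 lam0 ustar zstar lamstar : H)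
    (h1 : (ContinuousLinearMap.adjoint S) (S ut - g) + α • ut + lam0 + σ • (ut - z0) = 0)
    (h2 : zt ∈ K)
    (h2' : ∀ w ∈ K, (inner ℝ (lam0 + σ • (ut - zt)) (w - zt) : ℝ) ≤ 0)
    (h3 : (ContinuousLinearMap.adjoint S) (S ustar - g) + α • ustar + lamstar = 0)
    (h4 : ustar = zstar) (h5 : zstar ∈ K)
    (h6 : ∀ w ∈ K, (inner ℝ lamstar (w - zstar) : ℝ) ≤ 0)
    (lamt : H) (hlamt : lamt = lam0 + (τ * σ) • (ut - zt)) :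
    α * ‖ut - ustar‖ ^ 2 + (1 - τ) * σ / 2 * ‖ut - zt‖ ^ 2 + σ / 2 * ‖ut - z0‖ ^ 2 ≤
      1 / (2 * τ * σ) * ‖lamstar - lam0‖ ^ 2 + σ / 2 * ‖zstar - z0‖ ^ 2
        - 1 / (2 * τ * σ) * ‖lamstar - lamt‖ ^ 2 - σ / 2 * ‖zstar - zt‖ ^ 2 := by
  subst hlamt h4
  have hgrad_ut : tikhonovGrad S g α ut = -(lam0 + σ • (ut - z0)) :=
    eq_neg_of_add_eq_zero_left (by rw [tikhonovGrad, ← add_assoc, h1])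
  have hgrad_ustar : tikhonovGrad S g α ustar = -lamstar := eq_neg_of_add_eq_zero_left h3
  have hu := tikhonovGrad_strongMonotone S g α ut ustar
  rw [hgrad_ut, hgrad_ustar, neg_sub_neg, sub_add_eq_sub_sub, inner_sub_left,
    real_inner_smul_left] at hu
  have hz := real_inner_sub_sub_nonpos_of_forall_inner_nonpos h2 h5 h2' h6
  rw [add_sub_right_comm, ← neg_sub lamstar, inner_add_left, inner_neg_left,
    real_inner_smul_left] at hz
  have hsplit : inner ℝ (lamstar - lam0) (ut - zt) =
      inner ℝ (lamstar - lam0) (ut - ustar) + inner ℝ (lamstar - lam0) (ustar - zt) := by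
    rw [← inner_add_right, sub_add_sub_cancel]
  have hlam := one_div_two_mul_norm_sq_sub_norm_sub_smul_sq (by positivity : τ * σ ≠ 0)
    (lamstar - lam0) (ut - zt)
  rw [← sub_add_eq_sub_sub, ← mul_assoc] at hlam
  have hfour := two_mul_inner_add_two_mul_inner_eq ut ustar z0 zt
  linear_combination hu + hz - hsplit - hlam - σ / 2 * hfour

/-- Proposition 3.6 (one abstract step of the exact ADMM measured against a KKT point),
with the corrected coefficient `(1 − τ)`:
`(1/(2τσ))‖λ* − λ⁰‖² + (σ/2)‖z* − z⁰‖² − (1/(2τσ))‖λ* − λ̃‖² − (σ/2)‖z* − z̃‖²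
  ≥ α‖ũ − u*‖² + ((1−τ)σ/2)‖ũ − z̃‖² + (σ/2)‖ũ − z⁰‖²`. -/
theorem stmt_11 {H : Type*} [NormedAddCommGroup H] [InnerProductSpace ℝ H] [CompleteSpace H]
    (S : H →L[ℝ] H)
    (K : Set H) (hKne : K.Nonempty) (hKcl : IsClosed K) (hKconv : Convex ℝ K)
    (α σ τ : ℝ) (hα : 0 < α) (hσ : 0 < σ) (hτ : 0 < τ) (g : H)
    (ut zt z0 lam0 ustar zstar lamstar : H)
    (h1 : (ContinuousLinearMap.adjoint S) (S ut - g) + α • ut + lam0 + σ • (ut - z0) = 0)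
    (h2 : zt ∈ K)
    (h2' : ∀ w ∈ K, (inner ℝ (lam0 + σ • (ut - zt)) (w - zt) : ℝ) ≤ 0)
    (h3 : (ContinuousLinearMap.adjoint S) (S ustar - g) + α • ustar + lamstar = 0)
    (h4 : ustar = zstar) (h5 : zstar ∈ K)
    (h6 : ∀ w ∈ K, (inner ℝ lamstar (w - zstar) : ℝ) ≤ 0)
    (lamt : H) (hlamt : lamt = lam0 + (τ * σ) • (ut - zt)) :
    α * ‖ut - ustar‖ ^ 2 + (1 - τ) * σ / 2 * ‖ut - zt‖ ^ 2 + σ / 2 * ‖ut - z0‖ ^ 2 ≤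
      1 / (2 * τ * σ) * ‖lamstar - lam0‖ ^ 2 + σ / 2 * ‖zstar - z0‖ ^ 2
        - 1 / (2 * τ * σ) * ‖lamstar - lamt‖ ^ 2 - σ / 2 * ‖zstar - zt‖ ^ 2 :=
  stmt_11_general S K α σ τ hσ hτ g ut zt z0 lam0 ustar zstar lamstar h1 h2 h2' h3 h4 h5 h6 lamt
    hlamt
end

section
/- Let H be a real Hilbert space, S : H → H a bounded linear operator with Hilbert-space adjoint S*, K ⊆ H a nonempty closed convex set, g ∈ H, α > 0, σ > 0, and τ ∈ (0, (1+√5)/2). Define ∇Ĵ(u) := S*(S u − g) + α u. Let (u*, z*, λ*) be a KKT point: ∇Ĵ(u*) + λ* = 0, u* = z* ∈ K, and ⟨λ*, w − z*⟩ ≤ 0 for all w ∈ K. Let z⁰ ∈ K, λ⁰ ∈ H, let (ε_k)_{k≥0} ⊆ [0, ∞) satisfy ∑_{k=0}^∞ ε_k < ∞, and let sequences (u^{k+1}, z^{k+1}, λ^{k+1})_{k≥0} in H satisfy, for every k ≥ 0: (i) ‖∇Ĵ(u^{k+1}) + λ^k + σ(u^{k+1} − z^k)‖ ≤ ε_k;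 (ii) z^{k+1} = Π_K(u^{k+1} + λ^k/σ); (iii) λ^{k+1} = λ^k + τσ(u^{k+1} − z^{k+1}). Then u^k → u*, z^k → z*, and λ^k → λ* strongly (in norm) in H as k → ∞. -/
/-!
Write `rᵏ = uᵏ - zᵏ`. Testing the inexact `u`-equation against `uᵏ⁺¹ - u*`, strong monotonicity
of `∇Ĵ` produces `α‖uᵏ⁺¹ - u*‖²`, the normal-cone inequalities of the projection and of the KKT
point control the multiplier terms, and monotonicity of the normal cone between two consecutive
projections bounds the remaining cross term. Altogether the energy
`‖λᵏ - λ*‖² + τσ²‖zᵏ - z*‖² + τσ²(1-τ)²‖rᵏ‖²` decreases by at least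
`τσα‖uᵏ⁺¹ - u*‖² + τσ²(1+τ-τ²)‖rᵏ⁺¹‖²`, up to an error `(τσ/α) ε_k²`. As `1 + τ - τ² > 0` for
`0 < τ < (1+√5)/2` and `∑ ε_k² < ∞`, both squared errors are summable, so `uᵏ → u*` and
`rᵏ → 0`; then the inexact `u`-equation gives `λᵏ → λ*`.
-/

open Filter Topology RealInnerProductSpace

theorem one_add_sub_sq_pos {τ : ℝ} (h0 : 0 < τ) (hτ : τ < Real.goldenRatio) :
    0 < 1 + τ - τ ^ 2 := by
  have h := mul_pos (sub_pos.2 hτ) (sub_pos.2 (Real.goldenConj_neg.trans h0))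
  linear_combination h + τ * Real.goldenRatio_add_goldenConj - Real.goldenRatio_mul_goldenConj

theorem Summable.sq_of_nonneg {ι : Type*} {f : ι → ℝ} (hf : Summable f) (h0 : ∀ i, 0 ≤ f i) :
    Summable fun i => f i ^ 2 :=
  (hf.mul_left (∑' i, f i)).of_nonneg_of_le (fun i => sq_nonneg _) fun i => by
    rw [sq]; exact mul_le_mul_of_nonneg_right (hf.le_tsum i fun j _ => h0 j) (h0 i)

theorem summable_of_succ_add_le_add {V a b : ℕ → ℝ} (hV : ∀ n, 0 ≤ V n) (ha : ∀ n, 0 ≤ a n)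
    (hb0 : ∀ n, 0 ≤ b n) (hb : Summable b) (h : ∀ n, V (n + 1) + a n ≤ V n + b n) :
    Summable a := by
  refine summable_of_sum_range_le ha (c := V 0 + ∑' n, b n) fun n => ?_
  have htel : V n + ∑ i ∈ Finset.range n, a i ≤ V 0 + ∑ i ∈ Finset.range n, b i := by
    induction n with
    | zero => simp
    | succ n ih => rw [Finset.sum_range_succ, Finset.sum_range_succ]; linarith [h n]
  linarith [hV n, hb.sum_le_tsum (Finset.range n) fun i _ => hb0 i]

theorem tendsto_zero_of_summable_norm_sq {H : Type*} [NormedAddCommGroup H] {f : ℕ → H}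
    (h : Summable fun n => ‖f n‖ ^ 2) : Tendsto f atTop (𝓝 0) := by
  rw [tendsto_zero_iff_norm_tendsto_zero]
  simpa [Real.sqrt_sq (norm_nonneg _)] using h.tendsto_atTop_zero.sqrt

section InnerProduct

variable {H : Type*} [NormedAddCommGroup H] [InnerProductSpace ℝ H]

theorem real_inner_sub_le_zero_of_forall_norm_sub_le {K : Set H} (hK : Convex ℝ K) {p y : H}
    (hy : y ∈ K) (hmin : ∀ w ∈ K, ‖p - y‖ ≤ ‖p - w‖) : ∀ w ∈ K, ⟪p - y, w - y⟫ ≤ 0 := by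
  have : Nonempty K := ⟨⟨y, hy⟩⟩
  refine (norm_eq_iInf_iff_real_inner_le_zero hK hy).1 <|
    le_antisymm (le_ciInf fun w => hmin w w.2) ?_
  exact ciInf_le ⟨0, by rintro x ⟨w, rfl⟩; exact norm_nonneg _⟩ (⟨y, hy⟩ : K)

theorem two_mul_real_inner_sub_sub (a b c : H) :
    2 * ⟪a - b, a - c⟫ = ‖a - c‖ ^ 2 - ‖b - c‖ ^ 2 + ‖a - b‖ ^ 2 := by
  have h := norm_sub_sq_real (a - c) (a - b)
  rw [sub_sub_sub_cancel_left, real_inner_comm] at h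
  linarith

theorem neg_le_two_mul_real_inner_smul (c : ℝ) (a b : H) :
    -(‖a‖ ^ 2 + c ^ 2 * ‖b‖ ^ 2) ≤ 2 * c * ⟪a, b⟫ := by
  have h := norm_add_sq_real a (c • b)
  rw [real_inner_smul_right, norm_smul, Real.norm_eq_abs, mul_pow, sq_abs] at h
  nlinarith [sq_nonneg ‖a + c • b‖]

theorem mul_norm_sub_sq_le_inner_adjoint_sub_add_smul [CompleteSpace H] (S : H →L[ℝ] H)
    (g : H) (α : ℝ) (a b : H) :
    α * ‖a - b‖ ^ 2 ≤
      ⟪(S.adjoint (S a - g) + α • a) - (S.adjoint (S b - g) + α • b), a - b⟫ := by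
  have hd : (S.adjoint (S a - g) + α • a) - (S.adjoint (S b - g) + α • b)
      = S.adjoint (S (a - b)) + α • (a - b) := by
    simp only [map_sub, smul_sub]; abel
  rw [hd, inner_add_left, real_inner_smul_left, ContinuousLinearMap.adjoint_inner_left,
    real_inner_self_eq_norm_sq, real_inner_self_eq_norm_sq]
  nlinarith [sq_nonneg ‖S (a - b)‖]

structure IsKKTPoint (K : Set H) (F : H → H) (zstar lamstar : H) : Prop where
  stationary : F zstar + lamstar = 0
  mem : zstar ∈ K
  normal : ∀ w ∈ K, ⟪lamstar, w - zstar⟫ ≤ 0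

structure IsInexactADMM (K : Set H) (F : H → H) (σ τ : ℝ) (ε : ℕ → ℝ) (u z lam : ℕ → H) :
    Prop where
  residual_le : ∀ k, ‖F (u (k + 1)) + lam k + σ • (u (k + 1) - z k)‖ ≤ ε k
  mem : ∀ k, z (k + 1) ∈ K
  norm_sub_le : ∀ k, ∀ w ∈ K,
    ‖u (k + 1) + σ⁻¹ • lam k - z (k + 1)‖ ≤ ‖u (k + 1) + σ⁻¹ • lam k - w‖
  dual_update : ∀ k, lam (k + 1) = lam k + (τ * σ) • (u (k + 1) - z (k + 1))

/-- The weight `(1 - τ) ^ 2` absorbs, via Young's inequality, the cross term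
`(1 - τ) * ⟪zᵏ⁺¹ - zᵏ, uᵏ - zᵏ⟫` left over from `inner_residual_le`. -/
def admmEnergy (σ τ : ℝ) (zstar lamstar : H) (u z lam : ℕ → H) (n : ℕ) : ℝ :=
  ‖lam n - lamstar‖ ^ 2 + τ * σ ^ 2 * ‖z n - zstar‖ ^ 2
    + τ * σ ^ 2 * (1 - τ) ^ 2 * ‖u n - z n‖ ^ 2

namespace IsInexactADMM

variable {K : Set H} {F : H → H} {σ τ : ℝ} {ε : ℕ → ℝ} {u z lam : ℕ → H}

theorem tolerance_nonneg (h : IsInexactADMM K F σ τ ε u z lam) (k : ℕ) : 0 ≤ ε k :=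
  (norm_nonneg _).trans (h.residual_le k)

theorem inner_multiplier_le_zero (h : IsInexactADMM K F σ τ ε u z lam) (hK : Convex ℝ K)
    (hσ : 0 < σ) (k : ℕ) : ∀ w ∈ K, ⟪lam k + σ • (u (k + 1) - z (k + 1)), w - z (k + 1)⟫ ≤ 0 := by
  intro w hw
  have hp : lam k + σ • (u (k + 1) - z (k + 1)) = σ • (u (k + 1) + σ⁻¹ • lam k - z (k + 1)) := by
    simp only [smul_sub, smul_add, smul_smul, mul_inv_cancel₀ hσ.ne', one_smul]; abel
  rw [hp, real_inner_smul_left]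
  exact mul_nonpos_of_nonneg_of_nonpos hσ.le <|
    real_inner_sub_le_zero_of_forall_norm_sub_le hK (h.mem k) (h.norm_sub_le k) w hw

-- monotonicity of the normal cone of `K` along `z (k + 1)`, `z (k + 2)`
theorem inner_residual_le (h : IsInexactADMM K F σ τ ε u z lam) (hK : Convex ℝ K) (hσ : 0 < σ)
    (k : ℕ) :
    (1 - τ) * ⟪z (k + 2) - z (k + 1), u (k + 1) - z (k + 1)⟫
      ≤ ⟪z (k + 2) - z (k + 1), u (k + 2) - z (k + 2)⟫ := by
  have h₁ := h.inner_multiplier_le_zero hK hσ k (z (k + 2)) (h.mem (k + 1))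
  have h₂ : ⟪lam (k + 1) + σ • (u (k + 2) - z (k + 2)), z (k + 1) - z (k + 2)⟫ ≤ 0 :=
    h.inner_multiplier_le_zero hK hσ (k + 1) (z (k + 1)) (h.mem k)
  rw [← neg_sub (z (k + 2)) (z (k + 1)), inner_neg_right, h.dual_update k] at h₂
  have hσ' : σ * ((1 - τ) * ⟪z (k + 2) - z (k + 1), u (k + 1) - z (k + 1)⟫)
      ≤ σ * ⟪z (k + 2) - z (k + 1), u (k + 2) - z (k + 2)⟫ := by
    simp only [inner_add_left, real_inner_smul_left] at h₁ h₂
    rw [real_inner_comm (u (k + 1) - z (k + 1)), real_inner_comm (u (k + 2) - z (k + 2))]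
    linarith
  exact le_of_mul_le_mul_left hσ' hσ

theorem norm_dual_sub_sq (h : IsInexactADMM K F σ τ ε u z lam) (lamstar : H) (k : ℕ) :
    ‖lam (k + 1) - lamstar‖ ^ 2 = ‖lam k - lamstar‖ ^ 2
      + 2 * (τ * σ) * ⟪lam k - lamstar, u (k + 1) - z (k + 1)⟫
      + (τ * σ) ^ 2 * ‖u (k + 1) - z (k + 1)‖ ^ 2 := by
  rw [h.dual_update k, add_sub_right_comm, norm_add_sq_real, real_inner_smul_right, norm_smul,
    Real.norm_eq_abs, mul_pow, sq_abs]
  ring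

theorem basic_inequality (h : IsInexactADMM K F σ τ ε u z lam) (hK : Convex ℝ K) (hσ : 0 < σ)
    {α : ℝ} (hF : ∀ a b, α * ‖a - b‖ ^ 2 ≤ ⟪F a - F b, a - b⟫) {zstar lamstar : H}
    (hkkt : IsKKTPoint K F zstar lamstar) (k : ℕ) :
    α * ‖u (k + 1) - zstar‖ ^ 2 + ⟪lam k - lamstar, u (k + 1) - z (k + 1)⟫
      + σ * ‖u (k + 1) - z (k + 1)‖ ^ 2 + σ * ⟪z (k + 1) - z k, z (k + 1) - zstar⟫
      + σ * ⟪z (k + 1) - z k, u (k + 1) - z (k + 1)⟫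
      ≤ ε k * ‖u (k + 1) - zstar‖ := by
  set r := u (k + 1) - z (k + 1)
  have hres : F (u (k + 1)) + lam k + σ • (u (k + 1) - z k)
      = (F (u (k + 1)) - F zstar) + ((lam k - lamstar) + σ • r) + σ • (z (k + 1) - z k) := by
    rw [eq_neg_of_add_eq_zero_left hkkt.stationary]; simp only [r, smul_sub]; abel
  have hu : u (k + 1) - zstar = (z (k + 1) - zstar) + r := by simp only [r]; abel
  have hCS : ⟪F (u (k + 1)) + lam k + σ • (u (k + 1) - z k), u (k + 1) - zstar⟫
      ≤ ε k * ‖u (k + 1) - zstar‖ :=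
    (real_inner_le_norm _ _).trans (mul_le_mul_of_nonneg_right (h.residual_le k) (norm_nonneg _))
  -- `lam k + σ • r` lies in the normal cone of `K` at `z (k + 1)`, and `lamstar` in that at `zstar`
  have hmono : 0 ≤ ⟪(lam k - lamstar) + σ • r, z (k + 1) - zstar⟫ := by
    have h₁ : ⟪lam k + σ • r, zstar - z (k + 1)⟫ ≤ 0 :=
      h.inner_multiplier_le_zero hK hσ k zstar hkkt.mem
    have h₂ := hkkt.normal (z (k + 1)) (h.mem k)
    rw [← neg_sub (z (k + 1)) zstar, inner_neg_right] at h₁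
    rw [sub_add_eq_add_sub, inner_sub_left]; linarith
  have hFu := hF (u (k + 1)) zstar
  rw [hres] at hCS
  rw [hu] at hCS hFu ⊢
  simp only [inner_add_left, inner_add_right, real_inner_smul_left,
    real_inner_self_eq_norm_sq] at hCS hFu hmono ⊢
  linarith

theorem admmEnergy_succ_le (h : IsInexactADMM K F σ τ ε u z lam) (hK : Convex ℝ K) (hσ : 0 < σ)
    (hτ : 0 < τ) {α : ℝ} (hF : ∀ a b, α * ‖a - b‖ ^ 2 ≤ ⟪F a - F b, a - b⟫) {zstar lamstar : H}
    (hkkt : IsKKTPoint K F zstar lamstar) (k : ℕ) :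
    admmEnergy σ τ zstar lamstar u z lam (k + 2) + 2 * τ * σ * α * ‖u (k + 2) - zstar‖ ^ 2
      + τ * σ ^ 2 * (1 + τ - τ ^ 2) * ‖u (k + 2) - z (k + 2)‖ ^ 2
      ≤ admmEnergy σ τ zstar lamstar u z lam (k + 1)
        + 2 * τ * σ * ε (k + 1) * ‖u (k + 2) - zstar‖ := by
  have hbasic := h.basic_inequality hK hσ hF hkkt (k + 1)
  have hdual := h.norm_dual_sub_sq lamstar (k + 1)
  have hprimal := two_mul_real_inner_sub_sub (z (k + 2)) (z (k + 1)) zstar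
  have hres := h.inner_residual_le hK hσ k
  have hyoung := neg_le_two_mul_real_inner_smul (1 - τ) (z (k + 2) - z (k + 1))
    (u (k + 1) - z (k + 1))
  simp only [show k + 1 + 1 = k + 2 from rfl] at hbasic hdual
  unfold admmEnergy
  linear_combination (2 * τ * σ) * hbasic + hdual - (τ * σ ^ 2) * hprimal
    + (2 * τ * σ ^ 2) * hres + (τ * σ ^ 2) * hyoung

theorem admmEnergy_succ_le_add_sq (h : IsInexactADMM K F σ τ ε u z lam) (hK : Convex ℝ K)
    (hσ : 0 < σ) (hτ : 0 < τ) {α : ℝ} (hα : 0 < α)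
    (hF : ∀ a b, α * ‖a - b‖ ^ 2 ≤ ⟪F a - F b, a - b⟫) {zstar lamstar : H}
    (hkkt : IsKKTPoint K F zstar lamstar) (k : ℕ) :
    admmEnergy σ τ zstar lamstar u z lam (k + 2) + (τ * σ * α * ‖u (k + 2) - zstar‖ ^ 2
      + τ * σ ^ 2 * (1 + τ - τ ^ 2) * ‖u (k + 2) - z (k + 2)‖ ^ 2)
      ≤ admmEnergy σ τ zstar lamstar u z lam (k + 1) + τ * σ / α * ε (k + 1) ^ 2 := by
  have hdesc := h.admmEnergy_succ_le hK hσ hτ hF hkkt k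
  have hyoung : 2 * ε (k + 1) * ‖u (k + 2) - zstar‖
      ≤ α * ‖u (k + 2) - zstar‖ ^ 2 + ε (k + 1) ^ 2 / α := by
    rw [← sub_nonneg]
    have : α * ‖u (k + 2) - zstar‖ ^ 2 + ε (k + 1) ^ 2 / α - 2 * ε (k + 1) * ‖u (k + 2) - zstar‖
        = (α * ‖u (k + 2) - zstar‖ - ε (k + 1)) ^ 2 / α := by
      field_simp; ring
    rw [this]; positivity
  have : τ * σ / α * ε (k + 1) ^ 2 = τ * σ * (ε (k + 1) ^ 2 / α) := by ring
  rw [this]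
  linear_combination hdesc + (τ * σ) * hyoung

theorem tendsto_dual (h : IsInexactADMM K F σ τ ε u z lam) {zstar lamstar : H}
    (hFc : ContinuousAt F zstar) (hstat : F zstar + lamstar = 0) (hε : Tendsto ε atTop (𝓝 0))
    (hu : Tendsto u atTop (𝓝 zstar)) (hz : Tendsto z atTop (𝓝 zstar)) :
    Tendsto lam atTop (𝓝 lamstar) := by
  have hu₁ : Tendsto (fun k => u (k + 1)) atTop (𝓝 zstar) := hu.comp (tendsto_add_atTop_nat 1)
  have hres : Tendsto (fun k => F (u (k + 1)) + lam k + σ • (u (k + 1) - z k)) atTop (𝓝 0) :=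
    squeeze_zero_norm h.residual_le hε
  have hlim := (hres.sub (hFc.tendsto.comp hu₁)).sub ((hu₁.sub hz).const_smul σ)
  rw [sub_self, smul_zero, sub_zero, zero_sub, neg_eq_of_add_eq_zero_right hstat] at hlim
  refine hlim.congr fun k => ?_
  simp only [Function.comp_apply]
  abel

theorem tendsto (h : IsInexactADMM K F σ τ ε u z lam) (hK : Convex ℝ K) (hσ : 0 < σ)
    (hτ₀ : 0 < τ) (hτ : τ < Real.goldenRatio) {α : ℝ} (hα : 0 < α)
    (hF : ∀ a b, α * ‖a - b‖ ^ 2 ≤ ⟪F a - F b, a - b⟫) {zstar lamstar : H}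
    (hFc : ContinuousAt F zstar) (hkkt : IsKKTPoint K F zstar lamstar) (hε : Summable ε) :
    Tendsto u atTop (𝓝 zstar) ∧ Tendsto z atTop (𝓝 zstar) ∧ Tendsto lam atTop (𝓝 lamstar) := by
  have hγ := one_add_sub_sq_pos hτ₀ hτ
  have hsum : Summable fun n => τ * σ * α * ‖u (n + 2) - zstar‖ ^ 2
      + τ * σ ^ 2 * (1 + τ - τ ^ 2) * ‖u (n + 2) - z (n + 2)‖ ^ 2 :=
    summable_of_succ_add_le_add (V := fun n => admmEnergy σ τ zstar lamstar u z lam (n + 1))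
      (fun n => by unfold admmEnergy; positivity) (fun n => by positivity)
      (fun n => by positivity)
      (((summable_nat_add_iff 1).2 (hε.sq_of_nonneg h.tolerance_nonneg)).mul_left (τ * σ / α))
      (h.admmEnergy_succ_le_add_sq hK hσ hτ₀ hα hF hkkt)
  have hu : Summable fun n => ‖u (n + 2) - zstar‖ ^ 2 :=
    (summable_mul_left_iff (by positivity : τ * σ * α ≠ 0)).1 <|
      hsum.of_nonneg_of_le (fun n => by positivity) fun n => le_add_of_nonneg_right (by positivity)
  have hr : Summable fun n => ‖u (n + 2) - z (n + 2)‖ ^ 2 :=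
    (summable_mul_left_iff (by positivity : τ * σ ^ 2 * (1 + τ - τ ^ 2) ≠ 0)).1 <|
      hsum.of_nonneg_of_le (fun n => by positivity) fun n => le_add_of_nonneg_left (by positivity)
  have hu_lim : Tendsto u atTop (𝓝 zstar) :=
    (tendsto_add_atTop_iff_nat 2).1 <|
      tendsto_sub_nhds_zero_iff.1 (tendsto_zero_of_summable_norm_sq hu)
  have hr_lim : Tendsto (fun n => u n - z n) atTop (𝓝 0) :=
    (tendsto_add_atTop_iff_nat 2).1 (tendsto_zero_of_summable_norm_sq hr)
  have hz_lim : Tendsto z atTop (𝓝 zstar) := by simpa using hu_lim.sub hr_lim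
  exact ⟨hu_lim, hz_lim,
    h.tendsto_dual hFc hkkt.stationary hε.tendsto_atTop_zero hu_lim hz_lim⟩

end IsInexactADMM

end InnerProduct

theorem stmt_14_general {H : Type*} [NormedAddCommGroup H] [InnerProductSpace ℝ H] [CompleteSpace H]
    (S : H →L[ℝ] H)
    (K : Set H) (hKconv : Convex ℝ K)
    (g : H) (α σ τ : ℝ) (hα : 0 < α) (hσ : 0 < σ)
    (hτ : 0 < τ ∧ τ < (1 + Real.sqrt 5) / 2)
    (gradJ : H → H)
    (hgrad : ∀ u : H, gradJ u = (ContinuousLinearMap.adjoint S) (S u - g) + α • u)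
    (ustar zstar lamstar : H)
    (hkkt1 : gradJ ustar + lamstar = 0)
    (hkkt2 : ustar = zstar) (hkkt3 : zstar ∈ K)
    (hkkt4 : ∀ w ∈ K, (inner ℝ lamstar (w - zstar) : ℝ) ≤ 0)
    (u z lam : ℕ → H)
    (ε : ℕ → ℝ) (hεsum : Summable ε)
    (h1 : ∀ k : ℕ, ‖gradJ (u (k + 1)) + lam k + σ • (u (k + 1) - z k)‖ ≤ ε k)
    (h2 : ∀ k : ℕ, z (k + 1) ∈ K ∧ ∀ w ∈ K,
        ‖u (k + 1) + σ⁻¹ • lam k - z (k + 1)‖ ≤ ‖u (k + 1) + σ⁻¹ • lam k - w‖)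
    (h3 : ∀ k : ℕ, lam (k + 1) = lam k + (τ * σ) • (u (k + 1) - z (k + 1))) :
    Filter.Tendsto u Filter.atTop (nhds ustar) ∧
    Filter.Tendsto z Filter.atTop (nhds zstar) ∧
    Filter.Tendsto lam Filter.atTop (nhds lamstar) := by
  obtain rfl : gradJ = fun v => ContinuousLinearMap.adjoint S (S v - g) + α • v := funext hgrad
  subst hkkt2
  have hADMM : IsInexactADMM K (fun v => ContinuousLinearMap.adjoint S (S v - g) + α • v) σ τ ε
      u z lam :=
    ⟨h1, fun k => (h2 k).1, fun k => (h2 k).2, h3⟩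
  exact hADMM.tendsto hKconv hσ hτ.1 hτ.2 hα
    (mul_norm_sub_sq_le_inner_adjoint_sub_add_smul S g α) (by fun_prop) ⟨hkkt1, hkkt3, hkkt4⟩ hεsum

/-- Convergence of the inexact ADMM in function space (Theorem 3.1, convergence part):
under summable inexactness `∑ ε_k < ∞` and step length `τ ∈ (0, (1+√5)/2)`, the iterates
`(u^k, z^k, λ^k)` converge strongly to the KKT point `(u*, z*, λ*)`. -/
theorem stmt_14 {H : Type*} [NormedAddCommGroup H] [InnerProductSpace ℝ H] [CompleteSpace H]
    (S : H →L[ℝ] H)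
    (K : Set H) (hKne : K.Nonempty) (hKcl : IsClosed K) (hKconv : Convex ℝ K)
    (g : H) (α σ τ : ℝ) (hα : 0 < α) (hσ : 0 < σ)
    (hτ : 0 < τ ∧ τ < (1 + Real.sqrt 5) / 2)
    (gradJ : H → H)
    (hgrad : ∀ u : H, gradJ u = (ContinuousLinearMap.adjoint S) (S u - g) + α • u)
    (ustar zstar lamstar : H)
    (hkkt1 : gradJ ustar + lamstar = 0)
    (hkkt2 : ustar = zstar) (hkkt3 : zstar ∈ K)
    (hkkt4 : ∀ w ∈ K, (inner ℝ lamstar (w - zstar) : ℝ) ≤ 0)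
    (u z lam : ℕ → H) (hz0 : z 0 ∈ K)
    (ε : ℕ → ℝ) (hεpos : ∀ k, 0 ≤ ε k) (hεsum : Summable ε)
    (h1 : ∀ k : ℕ, ‖gradJ (u (k + 1)) + lam k + σ • (u (k + 1) - z k)‖ ≤ ε k)
    (h2 : ∀ k : ℕ, z (k + 1) ∈ K ∧ ∀ w ∈ K,
        ‖u (k + 1) + σ⁻¹ • lam k - z (k + 1)‖ ≤ ‖u (k + 1) + σ⁻¹ • lam k - w‖)
    (h3 : ∀ k : ℕ, lam (k + 1) = lam k + (τ * σ) • (u (k + 1) - z (k + 1))) :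
    Filter.Tendsto u Filter.atTop (nhds ustar) ∧
    Filter.Tendsto z Filter.atTop (nhds zstar) ∧
    Filter.Tendsto lam Filter.atTop (nhds lamstar) :=
  stmt_14_general S K hKconv g α σ τ hα hσ hτ gradJ hgrad ustar zstar lamstar hkkt1 hkkt2 hkkt3
    hkkt4 u z lam ε hεsum h1 h2 h3
end
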